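/- Let c₁, c₂, c₃, c₄ ∈ ℝ with c₄ ≠ 0 and c₃/3 + c₄ ≠ 0, and define the rational function χ(π) := (π² + c₁π + c₂)/(c₃π + c₄) on the set where c₃π + c₄ ≠ 0. If χ(0) = 0, χ'(0) = 5/3, χ(1/3) = 1/3 and χ'(1/3) = 1/2, then necessarily (c₁, c₂, c₃, c₄) = (−5/3, 0, −1, −1), and consequently χ(π) = π(5−3π)/(3(1+π)) for every π with c₃π + c₄ ≠ 0. -/
import Mathlib


noncomputable section

lemma pade_hasDerivAt (c₁ c₂ c₃ c₄ x : ℝ) (hx : c₃ * x + c₄ ≠ 0) :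
    HasDerivAt (fun π : ℝ => (π ^ 2 + c₁ * π + c₂) / (c₃ * π + c₄))
      (((2 * x + c₁) * (c₃ * x + c₄) - (x ^ 2 + c₁ * x + c₂) * c₃) / (c₃ * x + c₄) ^ 2) x := by
  have h1 : HasDerivAt (fun π : ℝ => π ^ 2 + c₁ * π + c₂) (2 * x + c₁) x := by
    have := ((hasDerivAt_pow 2 x).add ((hasDerivAt_id x).const_mul c₁)).add_const c₂
    simpa [mul_comm] using this
  have h2 : HasDerivAt (fun π : ℝ => c₃ * π + c₄) c₃ x := by
    simpa using ((hasDerivAt_id x).const_mul c₃).add_const c₄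
  exact h1.div h2 hx

/-- A Padé-like P2/P1 approximant `χ(π) = (π² + c₁π + c₂)/(c₃π + c₄)` matching the Synge
boundary data `χ(0) = 0`, `χ'(0) = 5/3`, `χ(1/3) = 1/3`, `χ'(1/3) = 1/2` necessarily has
`(c₁, c₂, c₃, c₄) = (−5/3, 0, −1, −1)`, i.e. it is the Taub–Mathews indicatrix
`χ(π) = π(5−3π)/(3(1+π))`. -/
theorem taub_mathews_from_pade
    (c₁ c₂ c₃ c₄ : ℝ) (hc₄ : c₄ ≠ 0) (hc : c₃ / 3 + c₄ ≠ 0)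
    (h0 : (fun π : ℝ => (π ^ 2 + c₁ * π + c₂) / (c₃ * π + c₄)) 0 = 0)
    (h0' : deriv (fun π : ℝ => (π ^ 2 + c₁ * π + c₂) / (c₃ * π + c₄)) 0 = 5 / 3)
    (h13 : (fun π : ℝ => (π ^ 2 + c₁ * π + c₂) / (c₃ * π + c₄)) (1 / 3) = 1 / 3)
    (h13' : deriv (fun π : ℝ => (π ^ 2 + c₁ * π + c₂) / (c₃ * π + c₄)) (1 / 3) = 1 / 2) :
    (c₁ = -5 / 3 ∧ c₂ = 0 ∧ c₃ = -1 ∧ c₄ = -1)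
    ∧ ∀ π : ℝ, c₃ * π + c₄ ≠ 0 →
        (π ^ 2 + c₁ * π + c₂) / (c₃ * π + c₄) = π * (5 - 3 * π) / (3 * (1 + π)) := by
  have hx0 : c₃ * 0 + c₄ ≠ 0 := by simpa using hc₄
  have hx3 : c₃ * (1 / 3) + c₄ ≠ 0 := by
    have h : c₃ * (1 / 3) + c₄ = c₃ / 3 + c₄ := by ring
    rw [h]; exact hc
  have d0 := (pade_hasDerivAt c₁ c₂ c₃ c₄ 0 hx0).deriv
  have d3 := (pade_hasDerivAt c₁ c₂ c₃ c₄ (1 / 3) hx3).deriv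
  rw [d0] at h0'
  rw [d3] at h13'
  simp only at h0 h13
  have e0 : c₂ = 0 := by
    have h := h0
    rw [show (0:ℝ) ^ 2 + c₁ * 0 + c₂ = c₂ by ring,
      show c₃ * 0 + c₄ = c₄ by ring, div_eq_iff hc₄, zero_mul] at h
    exact h
  subst e0
  rw [div_eq_iff (by simpa using hc₄)] at h0'
  rw [div_eq_iff hx3] at h13
  rw [div_eq_iff (pow_ne_zero 2 hx3)] at h13'
  have e1 : c₁ = 5 / 3 * c₄ := by
    have hm : c₄ * (c₁ - 5 / 3 * c₄) = 0 := by linear_combination h0'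
    rcases mul_eq_zero.mp hm with h | h
    · exact absurd h hc₄
    · linarith
  subst e1
  have e3 : c₃ = 1 + 2 * c₄ := by linarith [h13]
  subst e3
  have hD : (1 : ℝ) + 5 * c₄ ≠ 0 := fun h => hc (by linarith)
  have e4 : c₄ = -1 := by
    have hm : (1 + 5 * c₄) * (1 + c₄) = 0 := by linear_combination 18 * h13'
    rcases mul_eq_zero.mp hm with h | h
    · exact absurd h hD
    · linarith
  subst e4
  refine ⟨⟨by norm_num, rfl, by norm_num, by norm_num⟩, fun π hπ => ?_⟩
  have hπ' : (3 : ℝ) * (1 + π) ≠ 0 := by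
    intro h
    apply hπ
    have hp : π = -1 := by linarith [(mul_eq_zero.mp h).resolve_left (by norm_num)]
    rw [hp]; ring
  rw [div_eq_div_iff hπ hπ']
  ring
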